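/- arXiv:1111.5854 — 3 statements merged into one kernel-verified Lean document; each statement's English description precedes it below -/
import Mathlib

section
/- For every partial order (ℙ,≤) and every p ∈ ℙ, the map Ψ : V → V(p) given by Ψ(a) = â(p) is a well-defined monomorphism from (V,∈) into (V(p), ⊩_p ∈): (1) â(p) ∈ V(p) for every set a; (2) Ψ is injective, i.e. a ≠ b implies â(p) ≠ b̂(p); (3) b ∈ a if and only if b̂(p) ∈ â(p)(p), i.e. iff ⊩_p b̂(p) ∈ â(p). -/
set_option linter.unusedVariables false

noncomputable section

/-- Names for the cumulative hierarchy of variable sets over a partial order `P`: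
a name based at `p` assigns to every `q` a family of names (intended to be based at `q`). -/
inductive VName (P : Type) : Type 1
  | mk (base : P) (ι : P → Type) (el : ∀ q : P, ι q → VName P)

namespace VName

variable {P : Type}

/-- The base node of a name. -/
def base : VName P → P
  | mk p _ _ => p

/-- Restriction `f ↾ [r)` of a name to the cone above `r`. -/
def restrictN [Preorder P] : VName P → P → VName P
  | mk _ ι el, r => mk r (fun q => ι q × PLift (r ≤ q)) (fun q x => el q x.1)

/-- Extensional (hereditary) equality of names: this is the equality of the variable
sets (set valued functions on `[p)`) that the names denote. -/
def Equiv : VName P → VName P → Prop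
  | mk p ι el, mk p' ι' el' =>
      p = p' ∧ ∀ q : P, (∀ i : ι q, ∃ j : ι' q, Equiv (el q i) (el' q j)) ∧
        (∀ j : ι' q, ∃ i : ι q, Equiv (el q i) (el' q j))

theorem Equiv.refl : ∀ a : VName P, Equiv a a
  | mk _ ι el => ⟨rfl, fun q => ⟨fun i => ⟨i, Equiv.refl (el q i)⟩,
      fun j => ⟨j, Equiv.refl (el q j)⟩⟩⟩

theorem Equiv.symm : ∀ {a b : VName P}, Equiv a b → Equiv b a
  | mk _ _ el, mk _ _ el', ⟨hp, h⟩ =>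
      ⟨hp.symm, fun q =>
        ⟨fun j => let ⟨i, hi⟩ := (h q).2 j; ⟨i, Equiv.symm hi⟩,
         fun i => let ⟨j, hj⟩ := (h q).1 i; ⟨j, Equiv.symm hj⟩⟩⟩

theorem Equiv.trans : ∀ {a b c : VName P}, Equiv a b → Equiv b c → Equiv a c
  | mk _ _ el, mk _ _ el', mk _ _ el'', ⟨hp, h⟩, ⟨hp', h'⟩ =>
      ⟨hp.trans hp', fun q =>
        ⟨fun i => let ⟨j, hj⟩ := (h q).1 i; let ⟨k, hk⟩ := (h' q).1 j; ⟨k, Equiv.trans hj hk⟩,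
         fun k => let ⟨j, hj⟩ := (h' q).2 k; let ⟨i, hi⟩ := (h q).2 j; ⟨i, Equiv.trans hi hj⟩⟩⟩

instance setoid (P : Type) : Setoid (VName P) :=
  ⟨Equiv, Equiv.refl, Equiv.symm, Equiv.trans⟩

end VName

/-- Variable sets over `P`: names modulo extensional equality. -/
abbrev VSet (P : Type) : Type 1 := Quotient (VName.setoid P)

namespace VSet

variable {P : Type}

/-- The base node. -/
def base : VSet P → P :=
  Quotient.lift VName.base (fun a b h => by cases a; cases b; exact h.1)

/-- The value of a name at a node, as a set of variable sets. -/
def elemsN : VName P → P → Set (VSet P)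
  | .mk _ ι el, q => Set.range fun i : ι q => (⟦el q i⟧ : VSet P)

theorem elemsN_congr : ∀ {a b : VName P}, VName.Equiv a b → elemsN a = elemsN b
  | .mk _ ι el, .mk _ ι' el', ⟨_, h⟩ => by
      funext q
      ext x
      constructor
      · rintro ⟨i, rfl⟩
        obtain ⟨j, hj⟩ := (h q).1 i
        exact ⟨j, (Quotient.sound hj).symm⟩
      · rintro ⟨j, rfl⟩
        obtain ⟨i, hi⟩ := (h q).2 j
        exact ⟨i, Quotient.sound hi⟩

/-- `f.elems q` is the value `f(q)` of the variable set `f` at the node `q`. -/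
def elems : VSet P → P → Set (VSet P) :=
  Quotient.lift elemsN fun _ _ h => elemsN_congr h

theorem restrictN_congr [Preorder P] (r : P) :
    ∀ {a b : VName P}, VName.Equiv a b → VName.Equiv (a.restrictN r) (b.restrictN r)
  | .mk _ _ el, .mk _ _ el', ⟨_, h⟩ =>
      ⟨rfl, fun q =>
        ⟨fun i => let ⟨j, hj⟩ := (h q).1 i.1; ⟨⟨j, i.2⟩, hj⟩,
         fun j => let ⟨i, hi⟩ := (h q).2 j.1; ⟨⟨i, j.2⟩, hi⟩⟩⟩

/-- Restriction `f ↾ [r)`. -/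
def restrict [Preorder P] (f : VSet P) (r : P) : VSet P :=
  Quotient.lift (fun a : VName P => (⟦a.restrictN r⟧ : VSet P))
    (fun _ _ h => Quotient.sound (restrictN_congr r h)) f

end VSet

namespace VName

variable {P : Type}

/-- A name is *good* if it denotes an element of the cumulative hierarchy of variable
sets: its value at each `q` consists of good names based at `q`, it has empty value
outside of the cone of its base, and it is coherent under restrictions
(`g ∈ f(q)` and `q ≤ r` imply `g ↾ [r) ∈ f(r)`). -/
def GoodN [Preorder P] : VName P → Prop
  | .mk p ι el =>
      (∀ q : P, Nonempty (ι q) → p ≤ q) ∧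
      (∀ (q : P) (i : ι q), (el q i).base = q ∧ GoodN (el q i)) ∧
      (∀ (q : P) (i : ι q) (r : P), q ≤ r →
        ∃ j : ι r, VName.Equiv ((el q i).restrictN r) (el r j))

end VName

/-- `Vp p` is the universe `V(p) = ⋃_α V_α(p)` of variable sets at the node `p`. -/
def Vp {P : Type} [Preorder P] (p : P) : Set (VSet P) :=
  {f | ∃ a : VName P, VName.GoodN a ∧ a.base = p ∧ ⟦a⟧ = f}

/-- Membership forced at `p`: `⊩ₚ a ∈ f` iff `a ∈ f(p)`. -/
def memAt {P : Type} [Preorder P] (p : P) (a f : VSet P) : Prop := a ∈ f.elems p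

namespace VSet

variable {P : Type}

/-- Internal unordered pair `{a, b}` based at `q` (name level). -/
def upairN [Preorder P] (q : P) (a b : VName P) : VName P :=
  .mk q (fun r => Bool × PLift (q ≤ r))
    (fun r x => if x.1 then a.restrictN r else b.restrictN r)

/-- Internal (Kuratowski) ordered pair `(a, b)` based at `q` (name level);
its value at `r` is `{{a}↾[r), {a,b}↾[r)}`. -/
def pairN [Preorder P] (q : P) (a b : VName P) : VName P :=
  .mk q (fun r => Bool × PLift (q ≤ r))
    (fun r x => if x.1 then (upairN q a a).restrictN r else (upairN q a b).restrictN r)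

/-- Internal ordered pair `(a, b)` based at `q`. -/
def pairV [Preorder P] (q : P) (a b : VSet P) : VSet P := ⟦pairN q a.out b.out⟧

/-- Internal cartesian product (name level): `(f × g)(r) = {(a,b) : a ∈ f(r), b ∈ g(r)}`. -/
def prodN [Preorder P] (q : P) : VName P → VName P → VName P
  | .mk _ ι el, .mk _ ι' el' =>
      .mk q (fun r => (ι r × ι' r) × PLift (q ≤ r))
        (fun r x => pairN r (el r x.1.1) (el' r x.1.2))

/-- Internal cartesian product `A × B` based at `q`. -/
def prodV [Preorder P] (q : P) (A B : VSet P) : VSet P := ⟦prodN q A.out B.out⟧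

/-- Internal successor (name level): `Suc(f)(q) = {f↾[q)} ∪ f(q)`. -/
def sucN [Preorder P] : VName P → VName P
  | .mk p ι el =>
      .mk p (fun q => ι q ⊕ PLift (p ≤ q))
        (fun q x => Sum.elim (el q) (fun _ => (VName.mk p ι el).restrictN q) x)

/-- Internal successor `Suc(f)`. -/
def sucV [Preorder P] (f : VSet P) : VSet P := ⟦sucN f.out⟧

/-- The name `â(p)` of an external set (given by a `PSet`): `â(p)(q) = {b̂(q) : b ∈ a}`. -/
def hatN [Preorder P] : PSet → P → VName P
  | ⟨_, A⟩, p => .mk p (fun q => _ × PLift (p ≤ q)) (fun q x => hatN (A x.1) q)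

/-- The variable set `â(p)` associated to an external set `a`. -/
def hatV [Preorder P] (a : ZFSet) (p : P) : VSet P := ⟦hatN a.out p⟧

end VSet

/-- The von Neumann natural `n` as a `ZFSet`. -/
def natToZF : ℕ → ZFSet
  | 0 => ∅
  | n + 1 => insert (natToZF n) (natToZF n)


/-- First-order formulas of set theory (with de Bruijn variables `Fin n`), together
with an ordered-pair atom `isPair i j k` ("xᵢ = (xⱼ, xₖ)") and a pair-membership atom
`pairMem i j k` ("(xᵢ, xⱼ) ∈ xₖ"). -/
inductive SetFml : ℕ → Type
  | mem {n} (i j : Fin n) : SetFml n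
  | eq {n} (i j : Fin n) : SetFml n
  | isPair {n} (i j k : Fin n) : SetFml n
  | pairMem {n} (i j k : Fin n) : SetFml n
  | and {n} (f g : SetFml n) : SetFml n
  | or {n} (f g : SetFml n) : SetFml n
  | imp {n} (f g : SetFml n) : SetFml n
  | not {n} (f : SetFml n) : SetFml n
  | ex {n} (f : SetFml (n + 1)) : SetFml n
  | all {n} (f : SetFml (n + 1)) : SetFml n

namespace SetFml

/-- Biconditional. -/
def iff {n} (f g : SetFml n) : SetFml n := .and (.imp f g) (.imp g f)

/-- Relabelling of free variables (weakening/substitution of variables). -/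
def relabel : ∀ {n m : ℕ}, (Fin n → Fin m) → SetFml n → SetFml m
  | _, _, g, .mem i j => .mem (g i) (g j)
  | _, _, g, .eq i j => .eq (g i) (g j)
  | _, _, g, .isPair i j k => .isPair (g i) (g j) (g k)
  | _, _, g, .pairMem i j k => .pairMem (g i) (g j) (g k)
  | _, _, g, .and f₁ f₂ => .and (relabel g f₁) (relabel g f₂)
  | _, _, g, .or f₁ f₂ => .or (relabel g f₁) (relabel g f₂)
  | _, _, g, .imp f₁ f₂ => .imp (relabel g f₁) (relabel g f₂)
  | _, _, g, .not f => .not (relabel g f)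
  | _, _, g, .ex f => .ex (relabel (Fin.cases 0 fun i => (g i).succ) f)
  | _, _, g, .all f => .all (relabel (Fin.cases 0 fun i => (g i).succ) f)

/-- Universal closure of a formula. -/
def closeAll : ∀ {n : ℕ}, SetFml n → SetFml 0
  | 0, f => f
  | _ + 1, f => closeAll (.all f)

/-- Classical realization of a set-theoretic formula in a structure `(M, E)`. -/
def RealizeIn {M : Type*} (E : M → M → Prop) : ∀ {n}, SetFml n → (Fin n → M) → Prop
  | _, .mem i j, v => E (v i) (v j)
  | _, .eq i j, v => v i = v j
  | _, .isPair i j k, v =>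
      ∀ u, E u (v i) ↔ ((∀ t, E t u ↔ t = v j) ∨ (∀ t, E t u ↔ (t = v j ∨ t = v k)))
  | _, .pairMem i j k, v =>
      ∃ w, E w (v k) ∧
        ∀ u, E u w ↔ ((∀ t, E t u ↔ t = v i) ∨ (∀ t, E t u ↔ (t = v i ∨ t = v j)))
  | _, .and f g, v => RealizeIn E f v ∧ RealizeIn E g v
  | _, .or f g, v => RealizeIn E f v ∨ RealizeIn E g v
  | _, .imp f g, v => RealizeIn E f v → RealizeIn E g v
  | _, .not f, v => ¬ RealizeIn E f v
  | _, .ex f, v => ∃ a, RealizeIn E f (Fin.cons a v)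
  | _, .all f, v => ∀ a, RealizeIn E f (Fin.cons a v)

end SetFml

/-- The sheaf forcing relation `⊩ₚ φ[σ₁,…,σₙ]` over the topology of hereditary
(upward closed) subsets of `P`: since `[p)` is the least open neighbourhood of `p`,
`¬`, `→`, `∀` are evaluated over all `q ≥ p`, and `∃` is witnessed in `V(p)`. -/
def Forces {P : Type} [Preorder P] : ∀ {n : ℕ}, P → SetFml n → (Fin n → VSet P) → Prop
  | _, p, .mem i j, s => s i ∈ (s j).elems p
  | _, p, .eq i j, s => s i = s j
  | _, p, .isPair i j k, s => s i = VSet.pairV p (s j) (s k)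
  | _, p, .pairMem i j k, s => VSet.pairV p (s i) (s j) ∈ (s k).elems p
  | _, p, .and f g, s => Forces p f s ∧ Forces p g s
  | _, p, .or f g, s => Forces p f s ∨ Forces p g s
  | _, p, .imp f g, s => ∀ q : P, p ≤ q →
      Forces q f (fun i => (s i).restrict q) → Forces q g (fun i => (s i).restrict q)
  | _, p, .not f, s => ∀ q : P, p ≤ q → ¬ Forces q f (fun i => (s i).restrict q)
  | _, p, .ex f, s => ∃ σ ∈ Vp p, Forces p f (Fin.cons σ s)
  | _, p, .all f, s => ∀ q : P, p ≤ q → ∀ σ ∈ Vp q,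
      Forces q f (Fin.cons σ fun i => (s i).restrict q)


namespace SetFml

/-- `xᵢ ⊆ xⱼ`. -/
def fSub {n} (i j : Fin n) : SetFml n := .all (.imp (.mem 0 i.succ) (.mem 0 j.succ))

/-- "`x_f` is a set of ordered pairs and is single valued" (`f` is a function). -/
def fIsFunction {n} (f : Fin n) : SetFml n :=
  .and (.all (.imp (.mem 0 f.succ) (.ex (.ex (.isPair 2 1 0)))))
    (.all (.all (.all (.imp
      (.and (.pairMem 2 1 f.succ.succ.succ) (.pairMem 2 0 f.succ.succ.succ)) (.eq 1 0)))))

/-- "`x_f` is defined on every element of `x_a`". -/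
def fTotal {n} (f a : Fin n) : SetFml n :=
  .all (.imp (.mem 0 a.succ) (.ex (.pairMem 1 0 f.succ.succ)))

/-- "`x_f` is onto `x_b`". -/
def fOnto {n} (f b : Fin n) : SetFml n :=
  .all (.imp (.mem 0 b.succ) (.ex (.pairMem 0 1 f.succ.succ)))

/-- "`x_f` is injective". -/
def fInjective {n} (f : Fin n) : SetFml n :=
  .all (.all (.all (.imp
    (.and (.pairMem 2 0 f.succ.succ.succ) (.pairMem 1 0 f.succ.succ.succ)) (.eq 2 1))))

/-- "`x_f` is a function from `x_a` to `x_b`". -/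
def fFuncFromTo {n} (f a b : Fin n) : SetFml n :=
  .and (.all (.imp (.mem 0 f.succ) (.ex (.ex (.and (.mem 1 a.succ.succ.succ)
      (.and (.mem 0 b.succ.succ.succ) (.isPair 2 1 0)))))))
    (.and (.all (.all (.all (.imp
        (.and (.pairMem 2 1 f.succ.succ.succ) (.pairMem 2 0 f.succ.succ.succ)) (.eq 1 0)))))
      (fTotal f a))

/-- "`x_f` is an injective function from `x_a` to `x_b`". -/
def fInjFromTo {n} (f a b : Fin n) : SetFml n := .and (fFuncFromTo f a b) (fInjective f)

/-- "`x_f` is a surjective function from `x_a` onto `x_b`". -/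
def fSurjFromTo {n} (f a b : Fin n) : SetFml n := .and (fFuncFromTo f a b) (fOnto f b)

/-- `|x_a| < |x_b|`: there is an injective function from `x_a` to `x_b` and
no surjective function from `x_a` onto `x_b`. -/
def fCardLt {n} (a b : Fin n) : SetFml n :=
  .and (.ex (fInjFromTo 0 a.succ b.succ)) (.not (.ex (fSurjFromTo 0 a.succ b.succ)))

/-- "`x_S` is an inductive set" (contains the empty set, closed under successor). -/
def fInductive {n} (S : Fin n) : SetFml n :=
  .and (.ex (.and (.mem 0 S.succ) (.all (.not (.mem 0 1)))))
    (.all (.imp (.mem 0 S.succ) (.ex (.and (.mem 0 S.succ.succ)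
      (.all (.iff (.mem 0 1) (.or (.mem 0 2) (.eq 0 2))))))))

/-- "`x_N` is the set of natural numbers" (the least inductive set). -/
def fIsNat {n} (N : Fin n) : SetFml n :=
  .and (fInductive N) (.all (.imp (fInductive 0) (fSub N.succ 0)))

/-- "`x_pw` is the power set of `x_x`". -/
def fIsPow {n} (pw x : Fin n) : SetFml n := .all (.iff (.mem 0 pw.succ) (fSub 0 x.succ))

/-- `¬CH`: there is a set `B` with `|ℕ| < |B| < |P(ℕ)|`. -/
def negCHFml : SetFml 0 :=
  .ex (.ex (.ex (.and (fIsNat 2)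
    (.and (fIsPow 1 2) (.and (fCardLt 2 0) (fCardLt 0 1))))))

/-! The axioms of `ZFC` as sentences (the axiom of foundation in its `¬¬` form and
the axiom of choice in the form `∀𝓕(∀x∀y φ → ¬¬ψ*)`). -/

/-- Axiom of existence of the empty set: `∃x∀y ¬(y ∈ x)`. -/
def existsEmptyAx : SetFml 0 := .ex (.all (.not (.mem 0 1)))

/-- Axiom of extensionality: `∀x∀y(∀z(z ∈ x ↔ z ∈ y) → x = y)`. -/
def extAx : SetFml 0 :=
  .all (.all (.imp (.all (.iff (.mem 0 2) (.mem 0 1))) (.eq 1 0)))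

/-- Axiom of pairing: `∀x∀y∃z∀w(w ∈ z ↔ (w = x ∨ w = y))`. -/
def pairAx : SetFml 0 :=
  .all (.all (.ex (.all (.iff (.mem 0 1) (.or (.eq 0 3) (.eq 0 2))))))

/-- Axiom of union: `∀𝓕∃A∀x(x ∈ A ↔ ∃Y(Y ∈ 𝓕 ∧ x ∈ Y))`. -/
def unionAx : SetFml 0 :=
  .all (.ex (.all (.iff (.mem 0 1) (.ex (.and (.mem 0 3) (.mem 1 0))))))

/-- Axiom of power set: `∀x∃y∀z(z ∈ y ↔ ∀w(w ∈ z → w ∈ x))`. -/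
def powAx : SetFml 0 :=
  .all (.ex (.all (.iff (.mem 0 1) (.all (.imp (.mem 0 1) (.mem 0 3))))))

/-- Axiom of infinity: there exists an inductive set. -/
def infAx : SetFml 0 :=
  .ex (.and (.ex (.and (.mem 0 1) (.all (.not (.mem 0 1)))))
    (.all (.imp (.mem 0 1) (.ex (.and (.mem 0 2)
      (.all (.iff (.mem 0 1) (.or (.mem 0 2) (.eq 0 2)))))))))

/-- The matrix `x ∈ y ↔ (x ∈ z ∧ φ(x,z,w₁,…,wₙ))` of the comprehension axiom, in the
context `0 = x, 1 = y, 2 = z, 3+i = wᵢ`. -/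
def compInner {n} (φ : SetFml (n + 2)) : SetFml (n + 3) :=
  .iff (.mem 0 1) (.and (.mem 0 2)
    (φ.relabel (Fin.cases 0 (Fin.cases 2 fun j => j.succ.succ.succ))))

/-- The comprehension axiom for `φ(x,z,w₁,…,wₙ)` (free variables `0 = x, 1 = z,
2+i = wᵢ`): `∀z∀w₁…∀wₙ∃y∀x(x ∈ y ↔ (x ∈ z ∧ φ))`. -/
def compAx {n} (φ : SetFml (n + 2)) : SetFml 0 :=
  closeAll (.ex (.all (compInner φ)))

/-- `∀x(x ∈ A → ∃!y φ(x,y,A,w₁,…,wₙ))`, in the context `0 = A, 1+i = wᵢ`;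
`φ` has free variables `0 = x, 1 = y, 2 = A, 3+i = wᵢ`. -/
def replHyp {n} (φ : SetFml (n + 3)) : SetFml (n + 1) :=
  .all (.imp (.mem 0 1) (.ex (.and
    (φ.relabel (Fin.cases 1 (Fin.cases 0 (Fin.cases 2 fun j => j.succ.succ.succ))))
    (.all (.imp
      (φ.relabel (Fin.cases 2 (Fin.cases 0 (Fin.cases 3 fun j => j.succ.succ.succ.succ))))
      (.eq 0 1))))))

/-- `∃Y∀x(x ∈ A → ∃y(y ∈ Y ∧ φ(x,y,A,w⃗)))`, in the context `0 = A, 1+i = wᵢ`. -/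
def replConcl {n} (φ : SetFml (n + 3)) : SetFml (n + 1) :=
  .ex (.all (.imp (.mem 0 2) (.ex (.and (.mem 0 2)
    (φ.relabel (Fin.cases 1 (Fin.cases 0 (Fin.cases 3 fun j => j.succ.succ.succ.succ))))))))

/-- The replacement axiom for `φ(x,y,A,w₁,…,wₙ)`. -/
def replAx {n} (φ : SetFml (n + 3)) : SetFml 0 :=
  closeAll (.imp (replHyp φ) (replConcl φ))

/-- The axiom of foundation, in the (classically equivalent) `¬¬` form:
`¬∃x ¬(∃y(y ∈ x) → ∃y(y ∈ x ∧ ¬∃z(z ∈ x ∧ z ∈ y)))`. -/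
def foundAx : SetFml 0 :=
  .not (.ex (.not (.imp (.ex (.mem 0 1))
    (.ex (.and (.mem 0 1) (.not (.ex (.and (.mem 0 2) (.mem 0 1)))))))))

/-- `φ := (x ∈ 𝓕 ∧ y ∈ 𝓕 → ((∃z(z ∈ x ∧ z ∈ y) → x = y) ∧ ∃z(z ∈ x)))`,
in the context `0 = y, 1 = x, 2 = 𝓕`. -/
def acPhi : SetFml 3 :=
  .imp (.and (.mem 1 2) (.mem 0 2))
    (.and (.imp (.ex (.and (.mem 0 2) (.mem 0 1))) (.eq 1 0)) (.ex (.mem 0 2)))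

/-- `ψ* := ∃E(x ∈ 𝓕 → ∃a(a ∈ E ∧ a ∈ x ∧ ∀b(b ∈ E ∧ b ∈ x → ¬¬(b = a))))`,
in the context `0 = y, 1 = x, 2 = 𝓕`. -/
def acPsiStar : SetFml 3 :=
  .ex (.imp (.mem 2 3) (.ex (.and (.mem 0 1) (.and (.mem 0 3)
    (.all (.imp (.and (.mem 0 2) (.mem 0 4)) (.not (.not (.eq 0 1)))))))))

/-- The axiom of choice in the form `∀𝓕∀x∀y(φ → ¬¬ψ*)`. -/
def acAx : SetFml 0 := .all (.all (.all (.imp acPhi (.not (.not acPsiStar)))))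

end SetFml

/-! Everything is proved by recursion on a `PSet` representing `a`. Since
`â(p)(p) = {b̂(p) : b ∈ a}`, comparing values at the base `p` alone decides both equality
and membership; coherence holds because `b̂(q) ↾ [r) = b̂(r)`. -/

namespace VSet

variable {P : Type} [Preorder P]

theorem base_hatN (a : PSet) (p : P) : (hatN a p).base = p := by
  cases a; rfl

theorem restrictN_hatN : ∀ (a : PSet) {p r : P}, p ≤ r →
    VName.Equiv ((hatN a p).restrictN r) (hatN a r)
  | ⟨_, _⟩, _, _, hpr =>
    ⟨rfl, fun _ =>
      ⟨fun i => ⟨⟨i.1.1, i.2⟩, VName.Equiv.refl _⟩,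
       fun j => ⟨⟨⟨j.1, ⟨hpr.trans j.2.down⟩⟩, j.2⟩, VName.Equiv.refl _⟩⟩⟩

theorem hatN_good : ∀ (a : PSet) (p : P), VName.GoodN (hatN a p)
  | ⟨_, A⟩, _ =>
    ⟨fun _ hq => hq.elim fun i => i.2.down,
     fun q i => ⟨base_hatN _ q, hatN_good (A i.1) q⟩,
     fun _ i _ hqr => ⟨⟨i.1, ⟨i.2.down.trans hqr⟩⟩, restrictN_hatN (A i.1) hqr⟩⟩

theorem hatN_congr : ∀ {a b : PSet}, PSet.Equiv a b → ∀ p : P,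
    VName.Equiv (hatN a p) (hatN b p)
  | ⟨_, _⟩, ⟨_, _⟩, hab, _ =>
    ⟨rfl, fun q =>
      ⟨fun i => let ⟨j, hj⟩ := hab.1 i.1; ⟨⟨j, i.2⟩, hatN_congr hj q⟩,
       fun j => let ⟨i, hi⟩ := hab.2 j.1; ⟨⟨i, j.2⟩, hatN_congr hi q⟩⟩⟩

theorem equiv_of_hatN_equiv : ∀ {a b : PSet} {p : P},
    VName.Equiv (hatN a p) (hatN b p) → PSet.Equiv a b
  | ⟨_, _⟩, ⟨_, _⟩, p, ⟨_, h⟩ =>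
    ⟨fun i => let ⟨j, hj⟩ := (h p).1 ⟨i, ⟨le_rfl⟩⟩; ⟨j.1, equiv_of_hatN_equiv hj⟩,
     fun j => let ⟨i, hi⟩ := (h p).2 ⟨j, ⟨le_rfl⟩⟩; ⟨i.1, equiv_of_hatN_equiv hi⟩⟩

theorem mem_iff_hatN_mem_elemsN : ∀ (a b : PSet) (p : P),
    b ∈ a ↔ (⟦hatN b p⟧ : VSet P) ∈ elemsN (hatN a p) p
  | ⟨_, _⟩, _, p =>
    ⟨fun ⟨i, hi⟩ => ⟨⟨i, ⟨le_rfl⟩⟩, (Quotient.sound (hatN_congr hi p)).symm⟩,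
     fun ⟨i, hi⟩ => ⟨i.1, (equiv_of_hatN_equiv (Quotient.exact hi)).symm⟩⟩

theorem hatV_mem_Vp (a : ZFSet) (p : P) : hatV a p ∈ Vp p :=
  ⟨hatN a.out p, hatN_good _ _, base_hatN _ _, rfl⟩

theorem hatV_injective (p : P) : Function.Injective fun a : ZFSet => hatV a p :=
  fun _ _ h => Quotient.out_equiv_out.mp (equiv_of_hatN_equiv (Quotient.exact h))

theorem mem_iff_hatV_mem_elems (a b : ZFSet) (p : P) :
    b ∈ a ↔ hatV b p ∈ (hatV a p).elems p := by
  conv_lhs => rw [← ZFSet.mk_out a, ← ZFSet.mk_out b, ZFSet.mk_mem_iff]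
  exact mem_iff_hatN_mem_elemsN a.out b.out p

end VSet

/-- The map `Ψ : V → V(p)`, `Ψ(a) = â(p)`, is a well-defined monomorphism from
`(V, ∈)` into `(V(p), ⊩ₚ ∈)`:  (1) `â(p) ∈ V(p)`;  (2) `Ψ` is injective;
(3) `b ∈ a` iff `b̂(p) ∈ â(p)(p)`, i.e. iff `⊩ₚ b̂(p) ∈ â(p)`. -/
theorem hat_is_monomorphism {P : Type} [PartialOrder P] (p : P) :
    (∀ a : ZFSet, VSet.hatV a p ∈ Vp p) ∧
    (∀ a b : ZFSet, a ≠ b → VSet.hatV a p ≠ VSet.hatV b p) ∧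
    (∀ a b : ZFSet, b ∈ a ↔ VSet.hatV b p ∈ VSet.elems (VSet.hatV a p) p) :=
  ⟨fun a => VSet.hatV_mem_Vp a p,
   fun _ _ hab => (VSet.hatV_injective p).ne hab,
   fun a b => VSet.mem_iff_hatV_mem_elems a b p⟩
end
end

section
/- (Axiom of Comprehension is forced) Let (ℙ,≤) be a partial order with the hereditary-subsets topology and φ(x,z,w₁,…,wₙ) a formula of set theory. For every p ∈ ℙ: ⊩_p ∀z ∀w₁…∀wₙ ∃y ∀x (x ∈ y ↔ (x ∈ z ∧ φ)). Explicitly, for z, w₁,…,wₙ ∈ V(p) the function y with domain [p) defined by y(q) = { x ∈ z(q) : ⊩_q φ(x) } belongs to V(p) and witnesses the axiom. -/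
set_option linter.unusedVariables false

noncomputable section

/-! The separating set is `y(q) = {x ∈ z(q) : ⊩_q φ(x, z↾[q), w⃗↾[q))}`. It is coherent, hence in
`V(p)`, because forcing persists along `≤`: `⊩_q ψ(s)` implies `⊩_r ψ(s↾[r))` for `q ≤ r`. For the
membership atoms this is the coherence of the names in `V(q)`, for the pairing atoms it is the
commutation of internal pairs with restriction, and the other connectives are either pointwise or
already quantify over `[q)`. Since restricting to `[r)` does not change the value at `r`,
`⊩_r x ∈ y ↔ (x ∈ z ∧ φ)` then holds at every `r ≥ p` by construction. -/

section Restriction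

variable {P : Type} [Preorder P]

namespace VName

theorem base_restrictN (a : VName P) (r : P) : (a.restrictN r).base = r := by
  cases a; rfl

theorem restrictN_restrictN {q r : P} (h : q ≤ r) (a : VName P) :
    Equiv ((a.restrictN q).restrictN r) (a.restrictN r) := by
  obtain ⟨p, ι, el⟩ := a
  exact ⟨rfl, fun s =>
    ⟨fun i => ⟨⟨i.1.1, i.2⟩, Equiv.refl _⟩,
     fun j => ⟨⟨⟨j.1, ⟨h.trans j.2.down⟩⟩, j.2⟩, Equiv.refl _⟩⟩⟩

theorem GoodN.restrictN {a : VName P} (ha : a.GoodN) (r : P) : (a.restrictN r).GoodN := by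
  obtain ⟨p, ι, el⟩ := a
  obtain ⟨-, hel, hcoh⟩ := ha
  refine ⟨fun q ⟨⟨_, hrq⟩⟩ => hrq.down, fun q i => hel q i.1, fun q i s hqs => ?_⟩
  obtain ⟨j, hj⟩ := hcoh q i.1 s hqs
  exact ⟨⟨j, ⟨i.2.down.trans hqs⟩⟩, hj⟩

end VName

namespace VSet

theorem restrict_restrict {q r : P} (h : q ≤ r) (f : VSet P) :
    (f.restrict q).restrict r = f.restrict r :=
  Quotient.inductionOn f fun a => Quotient.sound (VName.restrictN_restrictN h a)

theorem elems_restrict {q r : P} (h : q ≤ r) (f : VSet P) :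
    (f.restrict q).elems r = f.elems r := by
  induction f using Quotient.inductionOn with
  | h a =>
    obtain ⟨p, ι, el⟩ := a
    ext x
    exact ⟨fun ⟨i, hi⟩ => ⟨i.1, hi⟩, fun ⟨i, hi⟩ => ⟨⟨i, ⟨h⟩⟩, hi⟩⟩

theorem upairN_congr {q : P} {a a' b b' : VName P} (ha : a.Equiv a') (hb : b.Equiv b') :
    (upairN q a b).Equiv (upairN q a' b') := by
  refine ⟨rfl, fun r => ⟨fun ⟨c, hc⟩ => ⟨⟨c, hc⟩, ?_⟩, fun ⟨c, hc⟩ => ⟨⟨c, hc⟩, ?_⟩⟩⟩ <;>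
    cases c
  all_goals first | exact restrictN_congr r ha | exact restrictN_congr r hb

theorem pairN_congr {q : P} {a a' b b' : VName P} (ha : a.Equiv a') (hb : b.Equiv b') :
    (pairN q a b).Equiv (pairN q a' b') := by
  refine ⟨rfl, fun r => ⟨fun ⟨c, hc⟩ => ⟨⟨c, hc⟩, ?_⟩, fun ⟨c, hc⟩ => ⟨⟨c, hc⟩, ?_⟩⟩⟩ <;>
    cases c
  all_goals first
    | exact restrictN_congr r (upairN_congr ha ha) | exact restrictN_congr r (upairN_congr ha hb)

theorem restrictN_upairN {p q : P} (h : p ≤ q) (a b : VName P) :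
    ((upairN p a b).restrictN q).Equiv (upairN q (a.restrictN q) (b.restrictN q)) := by
  refine ⟨rfl, fun r => ⟨fun ⟨⟨c, _⟩, hqr⟩ => ⟨⟨c, hqr⟩, ?_⟩,
    fun ⟨c, hqr⟩ => ⟨⟨⟨c, ⟨h.trans hqr.down⟩⟩, hqr⟩, ?_⟩⟩⟩ <;>
    cases c <;> exact (VName.restrictN_restrictN hqr.down _).symm

theorem restrictN_pairN {p q : P} (h : p ≤ q) (a b : VName P) :
    ((pairN p a b).restrictN q).Equiv (pairN q (a.restrictN q) (b.restrictN q)) := by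
  have hupair : ∀ {r : P}, q ≤ r → ∀ a b : VName P,
      ((upairN p a b).restrictN r).Equiv ((upairN q (a.restrictN q) (b.restrictN q)).restrictN r) :=
    fun hqr a b => (restrictN_upairN (h.trans hqr) a b).trans <|
      (upairN_congr (VName.restrictN_restrictN hqr a).symm
        (VName.restrictN_restrictN hqr b).symm).trans (restrictN_upairN hqr _ _).symm
  refine ⟨rfl, fun r => ⟨fun ⟨⟨c, _⟩, hqr⟩ => ⟨⟨c, hqr⟩, ?_⟩,
    fun ⟨c, hqr⟩ => ⟨⟨⟨c, ⟨h.trans hqr.down⟩⟩, hqr⟩, ?_⟩⟩⟩ <;>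
    cases c <;> exact hupair hqr.down _ _

theorem restrict_pairV {p q : P} (h : p ≤ q) (a b : VSet P) :
    (pairV p a b).restrict q = pairV q (a.restrict q) (b.restrict q) := by
  have hout : ∀ f : VSet P, (f.restrict q).out.Equiv (f.out.restrictN q) := fun f =>
    Quotient.exact (s := VName.setoid P) <| by
      rw [Quotient.out_eq]; conv_lhs => rw [← Quotient.out_eq f]
      rfl
  exact Quotient.sound <| (restrictN_pairN h a.out b.out).trans
    (pairN_congr (hout a).symm (hout b).symm)

end VSet

end Restriction

section Forcing

variable {P : Type} [Preorder P]

theorem restrict_mem_Vp {f : VSet P} {p : P} (hf : f ∈ Vp p) (q : P) : f.restrict q ∈ Vp q := by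
  obtain ⟨a, ha, -, rfl⟩ := hf
  exact ⟨a.restrictN q, ha.restrictN q, a.base_restrictN q, rfl⟩

theorem restrict_mem_elems_of_mem_Vp {p q : P} {f x : VSet P} (hf : f ∈ Vp p)
    (hx : x ∈ f.elems p) (hpq : p ≤ q) : x.restrict q ∈ f.elems q := by
  obtain ⟨⟨p', ι, el⟩, ⟨-, -, hcoh⟩, rfl, rfl⟩ := hf
  obtain ⟨i, rfl⟩ := hx
  obtain ⟨j, hj⟩ := hcoh _ i q hpq
  exact ⟨j, (Quotient.sound hj).symm⟩

theorem restrict_cons {m : ℕ} (σ : VSet P) (s : Fin m → VSet P) (q : P) :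
    (fun i => ((Fin.cons σ s : Fin (m + 1) → VSet P) i).restrict q) =
      Fin.cons (σ.restrict q) fun i => (s i).restrict q :=
  funext fun k => Fin.cases rfl (fun _ => rfl) k

theorem Forces.restrict {m : ℕ} {ψ : SetFml m} {p q : P} (hpq : p ≤ q) {s : Fin m → VSet P}
    (hs : ∀ i, s i ∈ Vp p) (h : Forces p ψ s) : Forces q ψ fun i => (s i).restrict q := by
  induction ψ generalizing p q with
  | mem i j =>
    show (s i).restrict q ∈ ((s j).restrict q).elems q
    rw [VSet.elems_restrict le_rfl]
    exact restrict_mem_elems_of_mem_Vp (hs j) h hpq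
  | eq i j => exact congrArg (VSet.restrict · q) h
  | isPair i j k =>
    show (s i).restrict q = VSet.pairV q ((s j).restrict q) ((s k).restrict q)
    rw [show s i = _ from h, VSet.restrict_pairV hpq]
  | pairMem i j k =>
    show VSet.pairV q ((s i).restrict q) ((s j).restrict q) ∈ ((s k).restrict q).elems q
    rw [VSet.elems_restrict le_rfl, ← VSet.restrict_pairV hpq]
    exact restrict_mem_elems_of_mem_Vp (hs k) h hpq
  | and f g ihf ihg => exact ⟨ihf hpq hs h.1, ihg hpq hs h.2⟩
  | or f g ihf ihg => exact h.imp (ihf hpq hs) (ihg hpq hs)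
  | imp f g =>
    intro r hqr
    simp only [VSet.restrict_restrict hqr]
    exact h r (hpq.trans hqr)
  | not f =>
    intro r hqr
    simp only [VSet.restrict_restrict hqr]
    exact h r (hpq.trans hqr)
  | ex f ihf =>
    obtain ⟨σ, hσ, hf⟩ := h
    refine ⟨σ.restrict q, restrict_mem_Vp hσ q, ?_⟩
    rw [← restrict_cons]
    exact ihf hpq (fun k => Fin.cases hσ hs k) hf
  | all f =>
    intro r hqr
    simp only [VSet.restrict_restrict hqr]
    exact h r (hpq.trans hqr)

theorem forces_relabel {m k : ℕ} (ψ : SetFml m) (g : Fin m → Fin k) (p : P)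
    (s : Fin k → VSet P) : Forces p (ψ.relabel g) s ↔ Forces p ψ (s ∘ g) := by
  induction ψ generalizing k p with
  | mem | eq | isPair | pairMem => rfl
  | and f f' ihf ihf' => exact and_congr (ihf g p s) (ihf' g p s)
  | or f f' ihf ihf' => exact or_congr (ihf g p s) (ihf' g p s)
  | imp f f' ihf ihf' => exact forall₂_congr fun q _ => imp_congr (ihf g q _) (ihf' g q _)
  | not f ihf => exact forall₂_congr fun q _ => not_congr (ihf g q _)
  | ex f ihf =>
    refine exists_congr fun σ => and_congr_right fun _ => (ihf _ p _).trans ?_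
    rw [show Fin.cons σ s ∘ Fin.cases 0 (fun i => (g i).succ) = Fin.cons σ (s ∘ g) from
      funext fun k => Fin.cases rfl (fun _ => by simp) k]
  | all f ihf =>
    refine forall₂_congr fun q _ => forall₂_congr fun σ _ => (ihf _ q _).trans ?_
    rw [show (Fin.cons σ fun i => (s i).restrict q) ∘ Fin.cases 0 (fun i => (g i).succ)
        = Fin.cons σ fun i => ((s ∘ g) i).restrict q from
      funext fun k => Fin.cases rfl (fun _ => by simp) k]

theorem forces_closeAll {m : ℕ} {ψ : SetFml m} {p : P}
    (h : ∀ q, p ≤ q → ∀ s : Fin m → VSet P, (∀ i, s i ∈ Vp q) → Forces q ψ s) :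
    Forces p ψ.closeAll ![] := by
  induction m generalizing p with
  | zero => exact h p le_rfl ![] finZeroElim
  | succ m ih =>
    refine ih (ψ := .all ψ) fun q hpq s hs r hqr σ hσ => ?_
    exact h r (hpq.trans hqr) _ fun k => Fin.cases hσ (fun k => restrict_mem_Vp (hs k) r) k

end Forcing

section Separation

variable {P : Type} [Preorder P]

def sepN {m : ℕ} (φ : SetFml (m + 1)) (s : Fin m → VSet P) : VName P → VName P
  | .mk p ι el =>
      .mk p (fun q => {i : ι q // Forces q φ (Fin.cons ⟦el q i⟧ fun k => (s k).restrict q)})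
        (fun q i => el q i.1)

variable {m : ℕ} (φ : SetFml (m + 1)) (s : Fin m → VSet P)

theorem base_sepN (a : VName P) : (sepN φ s a).base = a.base := by
  cases a; rfl

theorem elems_sepN (a : VName P) (q : P) :
    VSet.elems (⟦sepN φ s a⟧ : VSet P) q =
      {x | x ∈ VSet.elems (⟦a⟧ : VSet P) q ∧
        Forces q φ (Fin.cons x fun k => (s k).restrict q)} := by
  obtain ⟨p, ι, el⟩ := a
  ext x
  constructor
  · rintro ⟨i, rfl⟩
    exact ⟨⟨i.1, rfl⟩, i.2⟩
  · rintro ⟨⟨i, rfl⟩, hx⟩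
    exact ⟨⟨i, hx⟩, rfl⟩

theorem VName.GoodN.sepN {a : VName P} (ha : a.GoodN) (hs : ∀ k, s k ∈ Vp a.base) :
    (sepN φ s a).GoodN := by
  obtain ⟨p, ι, el⟩ := a
  obtain ⟨hbase, hel, hcoh⟩ := ha
  refine ⟨fun q ⟨i⟩ => hbase q ⟨i.1⟩, fun q i => hel q i.1, fun q i r hqr => ?_⟩
  obtain ⟨j, hj⟩ := hcoh q i.1 r hqr
  have hparams : ∀ k, (Fin.cons ⟦el q i.1⟧ fun k => (s k).restrict q : Fin (m + 1) → VSet P) k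
      ∈ Vp q :=
    Fin.cases ⟨_, (hel q i.1).2, (hel q i.1).1, rfl⟩ fun k => restrict_mem_Vp (hs k) q
  have hφ := i.2.restrict hqr hparams
  have hel_restrict : VSet.restrict (⟦el q i.1⟧ : VSet P) r = ⟦el r j⟧ := Quotient.sound hj
  simp only [restrict_cons, VSet.restrict_restrict hqr, hel_restrict] at hφ
  exact ⟨⟨j, hφ⟩, hj⟩

theorem exists_sep {p : P} {z : VSet P} (hz : z ∈ Vp p) (hs : ∀ k, s k ∈ Vp p) :
    ∃ y ∈ Vp p, ∀ q, y.elems q =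
      {x | x ∈ z.elems q ∧ Forces q φ (Fin.cons x fun k => (s k).restrict q)} := by
  obtain ⟨a, ha, rfl, rfl⟩ := hz
  exact ⟨⟦sepN φ s a⟧, ⟨_, ha.sepN φ s hs, base_sepN φ s a, rfl⟩, elems_sepN φ s a⟩

end Separation

section Comprehension

variable {P : Type} [Preorder P] {n : ℕ}

theorem forces_compInner_iff {φ : SetFml (n + 2)} {q : P} {x y z : VSet P}
    {w : Fin n → VSet P} :
    Forces q (SetFml.compInner φ) (Fin.cons x (Fin.cons y (Fin.cons z w))) ↔
      ∀ r, q ≤ r → (x.restrict r ∈ y.elems r ↔ x.restrict r ∈ z.elems r ∧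
        Forces r φ
          (Fin.cons (x.restrict r) (Fin.cons (z.restrict r) fun i => (w i).restrict r))) := by
  have hcomp : ∀ (a b c : VSet P) (v : Fin n → VSet P),
      (Fin.cons a (Fin.cons b (Fin.cons c v)) : Fin (n + 3) → VSet P) ∘
        Fin.cases 0 (Fin.cases 2 fun j => j.succ.succ.succ) = Fin.cons a (Fin.cons c v) :=
    fun a b c v => funext fun k => Fin.cases rfl (fun k => Fin.cases rfl (fun _ => rfl) k) k
  simp only [SetFml.compInner, SetFml.iff, Forces, restrict_cons, forces_relabel, hcomp,
    VSet.elems_restrict le_rfl]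
  exact ⟨fun h r hr => ⟨h.1 r hr, h.2 r hr⟩,
    fun h => ⟨fun r hr => (h r hr).1, fun r hr => (h r hr).2⟩⟩

theorem forces_all_compInner {φ : SetFml (n + 2)} {p : P} {y z : VSet P} {w : Fin n → VSet P}
    (hy : ∀ q, p ≤ q → y.elems q = {x | x ∈ z.elems q ∧
      Forces q φ (Fin.cons x (Fin.cons (z.restrict q) fun i => (w i).restrict q))}) :
    Forces p (.all (SetFml.compInner φ)) (Fin.cons y (Fin.cons z w)) := by
  intro q hpq x _
  simp only [restrict_cons, forces_compInner_iff]
  intro r hqr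
  simp only [VSet.elems_restrict hqr, VSet.restrict_restrict hqr, hy r (hpq.trans hqr)]
  exact Iff.rfl

theorem exists_comprehension (φ : SetFml (n + 2)) {p : P} {z : VSet P} (hz : z ∈ Vp p)
    {w : Fin n → VSet P} (hw : ∀ i, w i ∈ Vp p) :
    ∃ y ∈ Vp p,
      (∀ q : P, p ≤ q → VSet.elems y q =
        {x : VSet P | x ∈ VSet.elems z q ∧
          Forces q φ (Fin.cons x (Fin.cons (z.restrict q) fun i => (w i).restrict q))}) ∧
      Forces p (.all (SetFml.compInner φ)) (Fin.cons y (Fin.cons z w)) := by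
  obtain ⟨y, hy, hsep⟩ := exists_sep φ (Fin.cons z w) hz (Fin.cases hz hw)
  simp only [restrict_cons] at hsep
  exact ⟨y, hy, fun q _ => hsep q, forces_all_compInner fun q _ => hsep q⟩

end Comprehension

/-- **The axiom of comprehension is forced.**  For every formula `φ(x,z,w₁,…,wₙ)`
(free variables `0 = x`, `1 = z`, `2+i = wᵢ`) and every `p`:
`⊩ₚ ∀z∀w₁…∀wₙ∃y∀x(x ∈ y ↔ (x ∈ z ∧ φ))`.  Explicitly, for `z, w⃗ ∈ V(p)` the
variable set `y` with `y(q) = {x ∈ z(q) : ⊩_q φ(x)}` belongs to `V(p)` and witnesses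
the axiom. -/
theorem comprehension_forced {P : Type} [PartialOrder P] {n : ℕ}
    (φ : SetFml (n + 2)) (p : P) :
    Forces p (SetFml.compAx φ) ![] ∧
    (∀ z ∈ Vp p, ∀ w : Fin n → VSet P, (∀ i, w i ∈ Vp p) →
      ∃ y ∈ Vp p,
        (∀ q : P, p ≤ q → VSet.elems y q =
          {x : VSet P | x ∈ VSet.elems z q ∧
            Forces q φ (Fin.cons x (Fin.cons (z.restrict q) fun i => (w i).restrict q))}) ∧
        Forces p (.all (SetFml.compInner φ)) (Fin.cons y (Fin.cons z w))) := by
  refine ⟨forces_closeAll fun q _ s hs => ?_, fun z hz w hw => exists_comprehension φ hz hw⟩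
  obtain ⟨y, hy, -, hforces⟩ := exists_comprehension φ (hs 0) (w := Fin.tail s) fun i => hs i.succ
  exact ⟨y, hy, by rwa [Fin.cons_self_tail] at hforces⟩
end
end

section
/- (Axiom of Power Set is forced) Let (ℙ,≤) be a partial order with the hereditary-subsets topology. For every p ∈ ℙ: ⊩_p ∀x ∃y ∀z (z ∈ y ↔ ∀w(w ∈ z → w ∈ x)). Explicitly, for f ∈ V(p) the function g with domain [p) defined by g(q) = { h : [q) → ⋃_{r≥q} P(f(r)) | h(r) ⊆ f(r) for all r ≥ q, and i↾[t) ∈ h(t) whenever i ∈ h(r) and t ≥ r ≥ q } belongs to V(p) and satisfies ⊩_p ∀z (z ∈ g ↔ ∀w(w ∈ z → w ∈ f)). -/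
set_option linter.unusedVariables false

noncomputable section

namespace VSet

variable {P : Type} [Preorder P]

theorem elems_restrict_s7 (x : VSet P) {r u : P} (h : r ≤ u) :
    (x.restrict r).elems u = x.elems u := by
  induction x using Quotient.ind with
  | _ a =>
    obtain ⟨p, ι, el⟩ := a
    ext y
    constructor
    · rintro ⟨i, rfl⟩
      exact ⟨i.1, rfl⟩
    · rintro ⟨i, rfl⟩
      exact ⟨⟨i, ⟨h⟩⟩, rfl⟩

theorem restrict_mem_Vp {x : VSet P} {p : P} (hx : x ∈ Vp p) (r : P) : x.restrict r ∈ Vp r := by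
  obtain ⟨a, ha, -, rfl⟩ := hx
  exact ⟨a.restrictN r, ha.restrictN r, a.base_restrictN r, rfl⟩

theorem restrict_eq_self_of_mem_Vp {x : VSet P} {p : P} (hx : x ∈ Vp p) : x.restrict p = x := by
  obtain ⟨⟨p, ι, el⟩, ⟨h1, -, -⟩, rfl, rfl⟩ := hx
  exact Quotient.sound ⟨rfl, fun t =>
    ⟨fun i => ⟨i.1, VName.Equiv.refl _⟩, fun i => ⟨⟨i, ⟨h1 t ⟨i⟩⟩⟩, VName.Equiv.refl _⟩⟩⟩

theorem mem_Vp_of_mem_elems {x y : VSet P} {p u : P} (hx : x ∈ Vp p) (hy : y ∈ x.elems u) :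
    y ∈ Vp u := by
  obtain ⟨⟨p, ι, el⟩, ⟨-, h2, -⟩, -, rfl⟩ := hx
  obtain ⟨i, rfl⟩ := hy
  exact ⟨el u i, (h2 u i).2, (h2 u i).1, rfl⟩

def subsetsAt (f : VSet P) (q : P) : Set (VSet P) :=
  {h | h ∈ Vp q ∧ ∀ r, q ≤ r → h.elems r ⊆ f.elems r}

end VSet

namespace VName

variable {P : Type} {ι : P → Type} {el : ∀ q : P, ι q → VName P}

def subN (el : ∀ q : P, ι q → VName P) (q : P) (A : ∀ t, ι t → Prop) : VName P :=
  mk q (fun t => {i : ι t // A t i}) fun t i => el t i.1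

variable [Preorder P]

/-- Subsets of the name `mk p ι el` cannot be indexed by names, which live in `Type 1`;
they are indexed instead by the predicates `A` on its index types that this condition makes
into a variable set based at `q`. -/
def IsCoherent (el : ∀ q : P, ι q → VName P) (q : P) (A : ∀ t, ι t → Prop) : Prop :=
  (∀ t, (∃ i, A t i) → q ≤ t) ∧
  ∀ t i, A t i → ∀ u, t ≤ u → ∃ j, A u j ∧ Equiv ((el t i).restrictN u) (el u j)

def powN (el : ∀ q : P, ι q → VName P) (p : P) : VName P :=
  mk p (fun q => {A : ∀ t, ι t → Prop // IsCoherent el q A} × PLift (p ≤ q))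
    fun q x => subN el q x.1.1

theorem subN_goodN (hel : ∀ q i, (el q i).base = q ∧ (el q i).GoodN) {q : P}
    {A : ∀ t, ι t → Prop} (hA : IsCoherent el q A) : (subN el q A).GoodN := by
  refine ⟨fun t ⟨i⟩ => hA.1 t ⟨i.1, i.2⟩, fun t i => hel t i.1, fun t i u htu => ?_⟩
  obtain ⟨j, hj, he⟩ := hA.2 t i.1 i.2 u htu
  exact ⟨⟨j, hj⟩, he⟩

theorem powN_goodN (hel : ∀ q i, (el q i).base = q ∧ (el q i).GoodN)
    (hcoh : ∀ q i r, q ≤ r → ∃ j, Equiv ((el q i).restrictN r) (el r j)) (p : P) :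
    (powN el p).GoodN := by
  refine ⟨fun q ⟨x⟩ => x.2.down, fun q x => ⟨rfl, subN_goodN hel x.1.2⟩, ?_⟩
  rintro q ⟨⟨A, hA⟩, ⟨hpq⟩⟩ r hqr
  have hA' : IsCoherent el r (fun t i => A t i ∧ r ≤ t) := by
    refine ⟨fun t ⟨_, hi⟩ => hi.2, fun t i hi u htu => ?_⟩
    obtain ⟨j, hj, he⟩ := hA.2 t i hi.1 u htu
    exact ⟨j, ⟨hj, hi.2.trans htu⟩, he⟩
  refine ⟨⟨⟨_, hA'⟩, ⟨hpq.trans hqr⟩⟩, rfl, fun t => ?_⟩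
  exact ⟨fun i => ⟨⟨i.1.1, i.1.2, i.2.down⟩, Equiv.refl _⟩,
    fun j => ⟨⟨⟨j.1, j.2.1⟩, ⟨j.2.2⟩⟩, Equiv.refl _⟩⟩

theorem exists_subN_equiv (p : P) {b : VName P} (hb : b.GoodN)
    (hsub : ∀ r, b.base ≤ r → VSet.elems ⟦b⟧ r ⊆ VSet.elems ⟦mk p ι el⟧ r) :
    ∃ A, IsCoherent el b.base A ∧ Equiv (subN el b.base A) b := by
  obtain ⟨q, ι', el'⟩ := b
  obtain ⟨hb1, -, hb3⟩ := hb
  have hsub' : ∀ t (j : ι' t), ∃ i, Equiv (el t i) (el' t j) := fun t j =>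
    let ⟨i, hi⟩ := hsub t (hb1 t ⟨j⟩) ⟨j, rfl⟩
    ⟨i, Quotient.exact hi⟩
  refine ⟨fun t i => ∃ j, Equiv (el t i) (el' t j), ⟨fun t ⟨_, j, _⟩ => hb1 t ⟨j⟩, ?_⟩,
    rfl, fun t => ⟨fun ⟨_, j, hij⟩ => ⟨j, hij⟩, fun j => ?_⟩⟩
  · rintro t i ⟨j, hij⟩ u htu
    obtain ⟨j', hj'⟩ := hb3 t j u htu
    obtain ⟨i', hi'⟩ := hsub' u j'
    exact ⟨i', ⟨j', hi'⟩, ((VSet.restrictN_congr u hij).trans hj').trans hi'.symm⟩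
  · obtain ⟨i, hi⟩ := hsub' t j
    exact ⟨⟨i, j, hi⟩, hi⟩

theorem elems_powN {p : P} (hf : (mk p ι el).GoodN) {q : P} (hpq : p ≤ q) :
    VSet.elems ⟦powN el p⟧ q = VSet.subsetsAt ⟦mk p ι el⟧ q := by
  obtain ⟨-, hel, -⟩ := hf
  ext h
  constructor
  · rintro ⟨⟨⟨A, hA⟩, -⟩, rfl⟩
    exact ⟨⟨_, subN_goodN hel hA, rfl, rfl⟩, fun _ _ _ ⟨i, hi⟩ => ⟨i.1, hi⟩⟩
  · rintro ⟨⟨b, hb, rfl, rfl⟩, hsub⟩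
    obtain ⟨A, hA, hAb⟩ := exists_subN_equiv p hb hsub
    exact ⟨(⟨A, hA⟩, ⟨hpq⟩), Quotient.sound hAb⟩

end VName

theorem VSet.exists_powerset {P : Type} [Preorder P] {p : P} {f : VSet P} (hf : f ∈ Vp p) :
    ∃ g ∈ Vp p, ∀ q, p ≤ q → g.elems q = f.subsetsAt q := by
  obtain ⟨⟨p, ι, el⟩, hgood, rfl, rfl⟩ := hf
  exact ⟨⟦VName.powN el p⟧, ⟨_, VName.powN_goodN hgood.2.1 hgood.2.2 p, rfl, rfl⟩,
    fun q hpq => VName.elems_powN hgood hpq⟩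

section Forcing

variable {P : Type} [Preorder P]

theorem forces_fSub_iff {n : ℕ} {r : P} {t : Fin n → VSet P} {i j : Fin n} (hi : t i ∈ Vp r) :
    Forces r (SetFml.fSub i j) t ↔ ∀ u, r ≤ u → (t i).elems u ⊆ (t j).elems u := by
  simp only [SetFml.fSub, Forces, Fin.cons_zero, Fin.cons_succ]
  constructor
  · intro h u hru y hy
    have hyu : y ∈ Vp u := VSet.mem_Vp_of_mem_elems hi hy
    have hyy := h u hru y hyu u le_rfl
    simp only [VSet.elems_restrict_s7, le_refl, VSet.restrict_eq_self_of_mem_Vp hyu] at hyy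
    exact hyy hy
  · intro h u hru y _ v huv
    simpa only [VSet.elems_restrict_s7, le_refl, huv, hru.trans huv] using @h v (hru.trans huv) _

theorem forces_iff_of_forall {n : ℕ} {p : P} {φ ψ : SetFml n} {s : Fin n → VSet P}
    (h : ∀ r, p ≤ r →
      (Forces r φ (fun k => (s k).restrict r) ↔ Forces r ψ (fun k => (s k).restrict r))) :
    Forces p (φ.iff ψ) s :=
  ⟨fun r hr => (h r hr).1, fun r hr => (h r hr).2⟩

theorem forces_fIsPow {n : ℕ} {p : P} {s : Fin n → VSet P} {i j : Fin n}
    (h : ∀ q, p ≤ q → (s i).elems q = (s j).subsetsAt q) :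
    Forces p (SetFml.fIsPow i j) s := by
  intro q hpq σ hσ
  refine forces_iff_of_forall fun r hqr => ?_
  rw [forces_fSub_iff (VSet.restrict_mem_Vp hσ r)]
  simp only [Forces, Fin.cons_zero, Fin.cons_succ]
  rw [VSet.elems_restrict_s7 _ le_rfl, VSet.elems_restrict_s7 _ hqr, h r (hpq.trans hqr)]
  refine (and_iff_right (VSet.restrict_mem_Vp hσ r)).trans (forall₂_congr fun u hru => ?_)
  simp only [VSet.elems_restrict_s7, hru, hqr.trans hru]

end Forcing

/-- **The axiom of power set is forced.**  For every `p`: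
`⊩ₚ ∀x∃y∀z(z ∈ y ↔ ∀w(w ∈ z → w ∈ x))`.  Explicitly, for `f ∈ V(p)` the variable set
`g` whose value `g(q)` consists of all variable sets `h ∈ V(q)` with `h(r) ⊆ f(r)` for
all `r ≥ q` belongs to `V(p)` and satisfies `⊩ₚ ∀z(z ∈ g ↔ ∀w(w ∈ z → w ∈ f))`. -/
theorem powerset_forced {P : Type} [PartialOrder P] (p : P) :
    Forces p SetFml.powAx ![] ∧
    (∀ f ∈ Vp p,
      ∃ g ∈ Vp p,
        (∀ q : P, p ≤ q → VSet.elems g q =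
          {h : VSet P | h ∈ Vp q ∧ ∀ r : P, q ≤ r → VSet.elems h r ⊆ VSet.elems f r}) ∧
        Forces p (.all (.iff (.mem 0 1) (.all (.imp (.mem 0 1) (.mem 0 3))))) ![g, f]) := by
  refine ⟨fun q _ f hf => ?_, fun f hf => ?_⟩
  · obtain ⟨g, hg, hpow⟩ := VSet.exists_powerset hf
    exact ⟨g, hg, forces_fIsPow (i := 0) (j := 1) hpow⟩
  · obtain ⟨g, hg, hpow⟩ := VSet.exists_powerset hf
    exact ⟨g, hg, hpow, forces_fIsPow (i := 0) (j := 1) hpow⟩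
end
end
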